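/- arXiv:1408.3025 — 2 statements merged into one kernel-verified Lean document; each statement's English description precedes it below -/
import Mathlib

section
/- Abstract L⁰/L¹ equivalence theorem: Let 𝒰 be a nonempty set of measurable functions on [0,T], each bounded in absolute value by 1 almost everywhere. Define J₀(u) = μ(supp u) and J₁(u) = ∫₀ᵀ |u|. Let 𝒰₁* be the set of minimizers of J₁ over 𝒰, and 𝒰₀* the set of minimizers of J₀ over 𝒰. Suppose 𝒰₁* is nonempty and every element of 𝒰₁* takes values in {-1,0,1} almost everywhere. Then 𝒰₀* = 𝒰₁*. -/
open MeasureTheory Set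

private lemma indicator_int (T : ℝ) (S : Set ℝ) (hS : MeasurableSet S)
    (hSsub : S ⊆ Icc (0:ℝ) T) :
    ∫ t in Icc (0:ℝ) T, S.indicator (fun _ => (1:ℝ)) t = (volume S).toReal := by
  rw [setIntegral_indicator hS]
  have : Icc (0:ℝ) T ∩ S = S := inter_eq_self_of_subset_right hSsub
  rw [this, setIntegral_const, smul_eq_mul, mul_one]
  rfl

private lemma integrable_abs (T : ℝ) (u : ℝ → ℝ) (hu : Measurable u)
    (hb : ∀ᵐ t, t ∈ Icc (0:ℝ) T → |u t| ≤ 1) :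
    IntegrableOn (fun t => |u t|) (Icc (0:ℝ) T) := by
  apply Integrable.mono' (integrable_const 1)
  · exact (hu.abs).aestronglyMeasurable
  · rw [ae_restrict_iff' measurableSet_Icc]
    filter_upwards [hb] with t ht htI
    simpa using ht htI

private lemma J1_le_J0 (T : ℝ) (u : ℝ → ℝ) (hu : Measurable u)
    (hb : ∀ᵐ t, t ∈ Icc (0:ℝ) T → |u t| ≤ 1) :
    ∫ t in Icc (0:ℝ) T, |u t| ≤ (volume {t ∈ Icc (0:ℝ) T | u t ≠ 0}).toReal := by
  set S : Set ℝ := {t ∈ Icc (0:ℝ) T | u t ≠ 0} with hSdef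
  have hS : MeasurableSet S := measurableSet_Icc.inter (hu (measurableSet_singleton 0).compl)
  have hSsub : S ⊆ Icc (0:ℝ) T := fun t ht => ht.1
  rw [← indicator_int T S hS hSsub]
  apply setIntegral_mono_ae_restrict (integrable_abs T u hu hb)
    ((integrable_const 1).indicator hS)
  rw [Filter.EventuallyLE, ae_restrict_iff' measurableSet_Icc]
  filter_upwards [hb] with t ht htI
  by_cases h0 : u t = 0
  · simp only [h0, abs_zero, indicator]; positivity
  · have : t ∈ S := ⟨htI, h0⟩
    simp [indicator_of_mem this, ht htI]

private lemma J1_eq_J0 (T : ℝ) (u : ℝ → ℝ) (hu : Measurable u)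
    (htern : ∀ᵐ t, t ∈ Icc (0:ℝ) T → u t ∈ ({-1, 0, 1} : Set ℝ)) :
    ∫ t in Icc (0:ℝ) T, |u t| = (volume {t ∈ Icc (0:ℝ) T | u t ≠ 0}).toReal := by
  set S : Set ℝ := {t ∈ Icc (0:ℝ) T | u t ≠ 0} with hSdef
  have hS : MeasurableSet S := measurableSet_Icc.inter (hu (measurableSet_singleton 0).compl)
  have hSsub : S ⊆ Icc (0:ℝ) T := fun t ht => ht.1
  rw [← indicator_int T S hS hSsub]
  apply setIntegral_congr_ae measurableSet_Icc
  filter_upwards [htern] with t ht htI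
  simp only [mem_insert_iff, mem_singleton_iff] at ht
  rcases ht htI with h | h | h
  · simp [hSdef, indicator, htI.1, htI.2, h]
  · simp [hSdef, indicator, h]
  · simp [hSdef, indicator, htI.1, htI.2, h]

theorem maximum_handsoff_eq_L1_optimal (T : ℝ) (hT : 0 < T)
    (U : Set (ℝ → ℝ)) (hUne : U.Nonempty)
    (hmeas : ∀ u ∈ U, Measurable u)
    (hbdd : ∀ u ∈ U, ∀ᵐ t, t ∈ Icc (0:ℝ) T → |u t| ≤ 1)
    (J0 J1 : (ℝ → ℝ) → ℝ)
    (hJ0 : ∀ u, J0 u = (volume {t ∈ Icc (0:ℝ) T | u t ≠ 0}).toReal)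
    (hJ1 : ∀ u, J1 u = ∫ t in Icc (0:ℝ) T, |u t|)
    (U0 U1 : Set (ℝ → ℝ))
    (hU0 : U0 = {u ∈ U | ∀ v ∈ U, J0 u ≤ J0 v})
    (hU1 : U1 = {u ∈ U | ∀ v ∈ U, J1 u ≤ J1 v})
    (hU1ne : U1.Nonempty)
    (htern : ∀ u ∈ U1, ∀ᵐ t, t ∈ Icc (0:ℝ) T → u t ∈ ({-1, 0, 1} : Set ℝ)) :
    U0 = U1 := by
  -- for all u ∈ U1: J1 u = J0 u
  have heq : ∀ u ∈ U1, J1 u = J0 u := fun u hu => by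
    rw [hJ1, hJ0]
    exact J1_eq_J0 T u (hmeas u ((hU1 ▸ hu).1)) (htern u hu)
  have hle : ∀ v ∈ U, J1 v ≤ J0 v := fun v hv => by
    rw [hJ1, hJ0]; exact J1_le_J0 T v (hmeas v hv) (hbdd v hv)
  obtain ⟨w, hw⟩ := hU1ne
  have hwU : w ∈ U := (hU1 ▸ hw).1
  have hwmin : ∀ v ∈ U, J1 w ≤ J1 v := (hU1 ▸ hw).2
  -- U1 ⊆ U0
  have h10 : U1 ⊆ U0 := by
    intro u hu
    rw [hU0]
    refine ⟨(hU1 ▸ hu).1, fun v hv => ?_⟩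
    calc J0 u = J1 u := (heq u hu).symm
      _ ≤ J1 v := (hU1 ▸ hu).2 v hv
      _ ≤ J0 v := hle v hv
  have hwU0 : w ∈ U0 := h10 hw
  ext z
  constructor
  · intro hz
    have hzU : z ∈ U := (hU0 ▸ hz).1
    have hzmin : ∀ v ∈ U, J0 z ≤ J0 v := (hU0 ▸ hz).2
    have h1 : J0 z ≤ J0 w := hzmin w hwU
    have h2 : J0 w = J1 w := (heq w hw).symm
    have h3 : J1 w ≤ J1 z := hwmin z hzU
    have h4 : J1 z ≤ J0 z := hle z hzU
    have hJ1z : J1 z = J1 w := le_antisymm (by linarith) h3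
    rw [hU1]
    exact ⟨hzU, fun v hv => hJ1z ▸ hwmin v hv⟩
  · exact fun hz => h10 hz
end

section
/- Discrete-time ℓ⁰/ℓ¹ equivalence: Let 𝒰 ⊆ ℝᴺ be a nonempty set of vectors u with ‖u‖_∞ ≤ 1. Define J₀(u) as the number of nonzero entries of u, and J₁(u) = Σ_{k=0}^{N-1} |u_k|. Suppose the set 𝒰₁* of minimizers of J₁ over 𝒰 is nonempty and every element of 𝒰₁* has all entries in {-1, 0, 1}. Then the set 𝒰₀* of minimizers of J₀ over 𝒰 equals 𝒰₁*. -/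
/-!
Every vector in `U` has entries in `[-1, 1]`, so `J₁ ≤ J₀` on `U`, with equality at ternary
vectors, in particular on the ℓ¹-minimizers. Hence a ℓ¹-minimizer `w` satisfies
`J₀ w = J₁ w ≤ J₁ v ≤ J₀ v` for every `v ∈ U`, and squeezing this chain identifies the two sets
of minimizers.
-/

open Finset

variable {α β : Type*}

def minimizersOn [Preorder β] (f : α → β) (U : Set α) : Set α :=
  {u ∈ U | ∀ v ∈ U, f u ≤ f v}

theorem minimizersOn_eq_of_le_of_eq_on_minimizersOn [Preorder β] {U : Set α} {f g : α → β}
    (hle : ∀ v ∈ U, f v ≤ g v) (heq : ∀ u ∈ minimizersOn f U, f u = g u)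
    (hne : (minimizersOn f U).Nonempty) :
    minimizersOn g U = minimizersOn f U := by
  obtain ⟨w, hwU, hw⟩ := hne
  have hfw : f w = g w := heq w ⟨hwU, hw⟩
  ext x
  constructor
  · rintro ⟨hxU, hx⟩
    have hfx : f x ≤ f w :=
      calc f x ≤ g x := hle x hxU
        _ ≤ g w := hx w hwU
        _ = f w := hfw.symm
    exact ⟨hxU, fun v hv => hfx.trans (hw v hv)⟩
  · rintro ⟨hxU, hx⟩
    refine ⟨hxU, fun v hv => ?_⟩
    calc g x = f x := (heq x ⟨hxU, hx⟩).symm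
      _ ≤ f v := hx v hv
      _ ≤ g v := hle v hv

section Support

variable {ι R : Type*} [Fintype ι] [Ring R] [LinearOrder R] [IsOrderedRing R]

theorem sum_abs_le_card_support_of_abs_le_one {u : ι → R} (h : ∀ k, |u k| ≤ 1) :
    ∑ k, |u k| ≤ #{k | u k ≠ 0} := by
  rw [card_filter, Nat.cast_sum]
  refine sum_le_sum fun k _ => ?_
  by_cases hk : u k = 0 <;> simp [hk, h k]

theorem sum_abs_eq_card_support_of_mem_ternary {u : ι → R}
    (h : ∀ k, u k ∈ ({-1, 0, 1} : Set R)) :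
    ∑ k, |u k| = #{k | u k ≠ 0} := by
  rw [card_filter, Nat.cast_sum]
  refine sum_congr rfl fun k _ => ?_
  rcases h k with hk | hk | hk <;> simp_all

end Support

theorem discrete_maximum_handsoff_eq_l1_optimal_general (N : ℕ)
    (U : Set (Fin N → ℝ))
    (hbdd : ∀ u ∈ U, ∀ k, |u k| ≤ 1)
    (J0 : (Fin N → ℝ) → ℕ) (J1 : (Fin N → ℝ) → ℝ)
    (hJ0 : ∀ u, J0 u = (Finset.univ.filter (fun k => u k ≠ 0)).card)
    (hJ1 : ∀ u, J1 u = ∑ k, |u k|)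
    (U0 U1 : Set (Fin N → ℝ))
    (hU0 : U0 = {u ∈ U | ∀ v ∈ U, J0 u ≤ J0 v})
    (hU1 : U1 = {u ∈ U | ∀ v ∈ U, J1 u ≤ J1 v})
    (hU1ne : U1.Nonempty)
    (htern : ∀ u ∈ U1, ∀ k, u k ∈ ({-1, 0, 1} : Set ℝ)) :
    U0 = U1 := by
  subst hU0 hU1
  have hU0_cast : {u ∈ U | ∀ v ∈ U, J0 u ≤ J0 v} = minimizersOn (fun u => (J0 u : ℝ)) U := by
    simp only [minimizersOn, Nat.cast_le]
  rw [hU0_cast]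
  refine minimizersOn_eq_of_le_of_eq_on_minimizersOn (fun v hv => ?_) (fun u hu => ?_) hU1ne
  · rw [hJ1, hJ0]
    exact sum_abs_le_card_support_of_abs_le_one (hbdd v hv)
  · rw [hJ1, hJ0]
    exact sum_abs_eq_card_support_of_mem_ternary (htern u hu)

theorem discrete_maximum_handsoff_eq_l1_optimal (N : ℕ) (hN : 0 < N)
    (U : Set (Fin N → ℝ)) (hUne : U.Nonempty)
    (hbdd : ∀ u ∈ U, ∀ k, |u k| ≤ 1)
    (J0 : (Fin N → ℝ) → ℕ) (J1 : (Fin N → ℝ) → ℝ)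
    (hJ0 : ∀ u, J0 u = (Finset.univ.filter (fun k => u k ≠ 0)).card)
    (hJ1 : ∀ u, J1 u = ∑ k, |u k|)
    (U0 U1 : Set (Fin N → ℝ))
    (hU0 : U0 = {u ∈ U | ∀ v ∈ U, J0 u ≤ J0 v})
    (hU1 : U1 = {u ∈ U | ∀ v ∈ U, J1 u ≤ J1 v})
    (hU1ne : U1.Nonempty)
    (htern : ∀ u ∈ U1, ∀ k, u k ∈ ({-1, 0, 1} : Set ℝ)) :
    U0 = U1 :=
  discrete_maximum_handsoff_eq_l1_optimal_general N U hbdd J0 J1 hJ0 hJ1 U0 U1 hU0 hU1 hU1ne htern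
end
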